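/- Let F and G be locally finite pointed graphs (graphs with a distinguished basepoint vertex) with G connected. If every connected finite pointed subgraph Ĝ of G admits a pointed embedding into F, then G admits a pointed embedding into F. -/

import Mathlib

/-!
The balls around the basepoint of `G` are finite by local finiteness and induce connected
subgraphs, so each of them has a pointed embedding into `F`. Homomorphisms do not increase
distances, so such an embedding lands in the ball of the same radius in `F`, which is finite too:
each ball has only finitely many pointed embeddings. Restriction makes these finite nonempty sets
an inverse system, Kőnig's lemma yields a compatible sequence, and its union embeds `G`.
-/

open SimpleGraph

/-- `G` embeds into `H`: an injective graph homomorphism (not necessarily induced). -/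
def EmbedsIn {α β : Type*} (G : SimpleGraph α) (H : SimpleGraph β) : Prop :=
  ∃ f : G →g H, Function.Injective f

/-- `G` is self-embeddable: it admits an injective adjacency-preserving self-map whose
image, as a subgraph, is a proper subgraph (strictly smaller edge set). -/
def SelfEmbeddable {α : Type*} (G : SimpleGraph α) : Prop :=
  ∃ f : G →g G, Function.Injective f ∧ Sym2.map f '' G.edgeSet ⊂ G.edgeSet

/-- `G` is strongly self-embeddable: `G` embeds into `G - v` for every vertex `v`. -/
def StronglySelfEmbeddable {α : Type*} (G : SimpleGraph α) : Prop :=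
  ∀ v : α, EmbedsIn G (G.induce ({v}ᶜ : Set α))

/-- The subgraph of `F` consisting of the edges with color `b` under coloring `c`. -/
def colorSubgraph {α : Type*} (F : SimpleGraph α) (c : Sym2 α → Bool) (b : Bool) :
    SimpleGraph α where
  Adj x y := F.Adj x y ∧ c s(x, y) = b
  symm := by
    refine ⟨?_⟩
    intro x y h
    exact ⟨h.1.symm, by rw [Sym2.eq_swap]; exact h.2⟩
  loopless := by refine ⟨?_⟩; intro x h; exact F.irrefl h.1

/-- `F → (G, H)` : every red-blue coloring of the edges of `F` yields a red copy of `G`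
or a blue copy of `H` (here `true` = red, `false` = blue). -/
def Arrows {α β γ : Type*} (F : SimpleGraph α) (G : SimpleGraph β) (H : SimpleGraph γ) : Prop :=
  ∀ c : Sym2 α → Bool,
    EmbedsIn G (colorSubgraph F c true) ∨ EmbedsIn H (colorSubgraph F c false)

/-- `F` is `(G,H)`-minimal: it arrows `(G,H)` but no proper subgraph of it does. -/
def RamseyMinimal {α β γ : Type*} (F : SimpleGraph α) (G : SimpleGraph β)
    (H : SimpleGraph γ) : Prop :=
  Arrows F G H ∧ ∀ F' : SimpleGraph α, F' < F → ¬ Arrows F' G H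

/-- `G` has no isolated vertices. -/
def NoIsolated {α : Type*} (G : SimpleGraph α) : Prop := ∀ v, ∃ w, G.Adj v w

/-- The single-edge graph `K₂`. -/
def K2 : SimpleGraph (Fin 2) := ⊤

/-- The matching `nK₂` with `n` pairwise disjoint edges. -/
def Matching (n : ℕ) : SimpleGraph (Fin n × Fin 2) where
  Adj a b := a.1 = b.1 ∧ a.2 ≠ b.2
  symm := by refine ⟨?_⟩; intro a b h; exact ⟨h.1.symm, h.2.symm⟩
  loopless := by refine ⟨?_⟩; intro a h; exact h.2 rfl

/-- The disjoint union `nG` of `n` copies of `G`. -/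
def nCopies {V : Type*} (n : ℕ) (G : SimpleGraph V) : SimpleGraph (Fin n × V) where
  Adj a b := a.1 = b.1 ∧ G.Adj a.2 b.2
  symm := by refine ⟨?_⟩; intro a b h; exact ⟨h.1.symm, h.2.symm⟩
  loopless := by refine ⟨?_⟩; intro a h; exact G.irrefl h.2

/-- The infinite star `S_∞ = K_{1,∞}`, with center `none`. -/
def InfStar : SimpleGraph (Option ℕ) := SimpleGraph.fromRel (fun a _ => a = none)

/-- The finite star `K_{1,n}`, with center `none`. -/
def StarN (n : ℕ) : SimpleGraph (Option (Fin n)) := SimpleGraph.fromRel (fun a _ => a = none)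

/-- The ray `P_∞` (one-way infinite path) on `ℕ`. -/
def Ray : SimpleGraph ℕ := SimpleGraph.fromRel (fun a b => b = a + 1)

/-- The `k`-ray `P_{k∞}`: `k` rays glued at a common endpoint `none`. -/
def kRay (k : ℕ) : SimpleGraph (Option (Fin k × ℕ)) :=
  SimpleGraph.fromRel (fun a b =>
    (a = none ∧ ∃ i, b = some (i, 0)) ∨ (∃ i n, a = some (i, n) ∧ b = some (i, n + 1)))

namespace SimpleGraph

variable {V W : Type*} {G : SimpleGraph V} {F : SimpleGraph W}

theorem Hom.edist_le (f : G →g F) (u v : V) : F.edist (f u) (f v) ≤ G.edist u v := by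
  by_cases huv : G.Reachable u v
  · obtain ⟨w, hw⟩ := huv.exists_walk_length_eq_edist
    calc F.edist (f u) (f v) ≤ (w.map f).length := SimpleGraph.edist_le _
      _ = G.edist u v := by rw [Walk.length_map, hw]
  · simp [edist_eq_top_of_not_reachable huv]

theorem Walk.support_subset_ball {u c : V} (w : G.Walk u c) {r : ℕ∞} (hw : w.length < r) :
    ∀ x ∈ w.support, x ∈ G.ball c r := by
  classical
  exact fun x hx =>
  calc G.edist x c ≤ (w.dropUntil x hx).length := edist_le _
    _ ≤ w.length := by exact_mod_cast w.length_dropUntil_le_length hx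
    _ < r := hw

theorem edist_induce_ball {c v : V} {r : ℕ∞} (hv : v ∈ G.ball c r) (hc : c ∈ G.ball c r) :
    (G.induce (G.ball c r)).edist ⟨v, hv⟩ ⟨c, hc⟩ = G.edist v c := by
  refine le_antisymm ?_ ((Embedding.induce _).toHom.edist_le _ _)
  obtain ⟨w, hw⟩ := exists_walk_of_edist_ne_top (ne_top_of_lt hv)
  have hsupp := w.support_subset_ball (by rwa [hw])
  calc _ ≤ ((w.induce _ hsupp).length : ℕ∞) := edist_le _
    _ = G.edist v c := by
      rw [← Walk.length_map (Embedding.induce _).toHom, Walk.map_induce]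
      exact hw

theorem connected_induce_ball (c : V) {r : ℕ∞} (hr : 0 < r) :
    (G.induce (G.ball c r)).Connected := by
  refine (connected_iff_exists_forall_reachable _).mpr ⟨⟨c, mem_ball_self hr⟩, fun ⟨v, hv⟩ => ?_⟩
  refine (reachable_of_edist_ne_top ?_).symm
  rw [edist_induce_ball]
  exact ne_top_of_lt hv

theorem Hom.mem_ball_of_induce_ball {c : V} {r : ℕ∞} (hc : c ∈ G.ball c r)
    (f : G.induce (G.ball c r) →g F) (v : G.ball c r) : f v ∈ F.ball (f ⟨c, hc⟩) r :=
  calc F.edist (f v) (f ⟨c, hc⟩) ≤ (G.induce (G.ball c r)).edist v ⟨c, hc⟩ := f.edist_le _ _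
    _ = G.edist v c := edist_induce_ball v.2 hc
    _ < r := v.2

theorem finite_ball (hG : ∀ v, (G.neighborSet v).Finite) (c : V) (n : ℕ) :
    (G.ball c n).Finite := by
  induction n with
  | zero => simp
  | succ n ih =>
    refine ((ih.biUnion fun u _ => hG u).insert c).subset fun v hv => ?_
    obtain ⟨w, hw⟩ := exists_walk_of_edist_ne_top (ne_top_of_lt hv)
    cases w with
    | nil => exact Set.mem_insert _ _
    | @cons _ u _ hvu w =>
      refine Set.mem_insert_of_mem _ (Set.mem_biUnion (x := u) ?_ hvu.symm)
      have hlen : w.length < n := by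
        rw [mem_ball, ← hw, Walk.length_cons] at hv
        exact Nat.succ_lt_succ_iff.mp (by exact_mod_cast hv)
      exact (edist_le w).trans_lt (by exact_mod_cast hlen)

/-- A `Copy` is an injective homomorphism, so these are the pointed embeddings `(G, p) → (F, q)`. -/
abbrev PointedCopy (G : SimpleGraph V) (F : SimpleGraph W) (p : V) (q : W) : Type _ :=
  {f : Copy G F // f p = q}

theorem finite_pointedCopy_induce_ball (hG : ∀ v, (G.neighborSet v).Finite)
    (hF : ∀ w, (F.neighborSet w).Finite) {c : V} {n : ℕ} (hc : c ∈ G.ball c n) (q : W) :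
    Finite (PointedCopy (G.induce (G.ball c n)) F ⟨c, hc⟩ q) := by
  have := (finite_ball hG c n).to_subtype
  have := (finite_ball hF q n).to_subtype
  have hmem (f : PointedCopy (G.induce (G.ball c n)) F ⟨c, hc⟩ q) v : f.1 v ∈ F.ball q n := by
    obtain ⟨f, rfl⟩ := f
    exact f.toHom.mem_ball_of_induce_ball hc v
  refine Finite.of_injective (fun f v => (⟨f.1 v, hmem f v⟩ : F.ball q n)) ?_
  intro f g hfg
  exact Subtype.ext (Copy.ext fun v => congrArg Subtype.val (congrFun hfg v))

theorem exists_copy_of_compatible {s : ℕ → Set V} (hs : Monotone s) (hcover : ∀ v, ∃ n, v ∈ s n)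
    (f : ∀ n, Copy (G.induce (s n)) F)
    (hf : ∀ ⦃m n⦄ (h : m ≤ n) (v : s m), f n (Set.inclusion (hs h) v) = f m v) :
    ∃ g : Copy G F, ∀ n (v : s n), g v = f n v := by
  choose N hN using hcover
  let g (v : V) : W := f (N v) ⟨v, hN v⟩
  have hg n v (hv : v ∈ s n) : g v = f n ⟨v, hv⟩ := by
    change f (N v) ⟨v, hN v⟩ = _
    rw [← hf (le_max_left (N v) n) ⟨v, hN v⟩, ← hf (le_max_right (N v) n) ⟨v, hv⟩]
  have common (a b : V) : ∃ n, a ∈ s n ∧ b ∈ s n :=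
    ⟨max (N a) (N b), hs (le_max_left _ _) (hN a), hs (le_max_right _ _) (hN b)⟩
  refine ⟨⟨⟨g, fun {a b} hab => ?_⟩, fun a b hab => ?_⟩, fun n v => hg n v v.2⟩
  · obtain ⟨n, ha, hb⟩ := common a b
    rw [hg n a ha, hg n b hb]
    exact (f n).toHom.map_adj hab
  · obtain ⟨n, ha, hb⟩ := common a b
    change g a = g b at hab
    rw [hg n a ha, hg n b hb] at hab
    exact congrArg Subtype.val ((f n).injective hab)

theorem exists_pointedCopy_of_forall_induce_ball (hG : ∀ v, (G.neighborSet v).Finite)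
    (hF : ∀ w, (F.neighborSet w).Finite) (hconn : G.Connected) (p : V) (q : W)
    (h : ∀ n : ℕ, ∃ f : Copy (G.induce (G.ball p (n + 1 : ℕ))) F,
      f ⟨p, mem_ball_self (Nat.cast_pos.mpr n.succ_pos)⟩ = q) :
    ∃ f : Copy G F, f p = q := by
  -- `ball` is the open ball, hence the radius `n + 1`
  have hp (n : ℕ) : p ∈ G.ball p (n + 1 : ℕ) := mem_ball_self (Nat.cast_pos.mpr n.succ_pos)
  have hs : Monotone fun n : ℕ => G.ball p (n + 1 : ℕ) := fun m n h =>
    ball_mono (by exact_mod_cast Nat.succ_le_succ h)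
  let α (n : ℕ) := PointedCopy (G.induce (G.ball p (n + 1 : ℕ))) F ⟨p, hp n⟩ q
  let π {m n : ℕ} (h : m ≤ n) (f : α n) : α m := ⟨f.1.comp (induceHomOfLE _ (hs h)).toCopy, f.2⟩
  have _ (n : ℕ) : Finite (α n) := finite_pointedCopy_induce_ball hG hF (hp n) q
  have _ (n : ℕ) : Nonempty (α n) := let ⟨f, hf⟩ := h n; ⟨⟨f, hf⟩⟩
  obtain ⟨x, hx⟩ := exists_seq_forall_proj_of_forall_finite π (fun _ _ => rfl)
    (fun _ _ _ _ _ _ => rfl) (fun _ _ => Set.toFinite _)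
  have hcover (v : V) : ∃ n : ℕ, v ∈ G.ball p (n + 1 : ℕ) := by
    obtain ⟨w, hw⟩ := (hconn v p).exists_walk_length_eq_edist
    exact ⟨w.length, by rw [mem_ball, ← hw]; exact_mod_cast w.length.lt_succ_self⟩
  obtain ⟨g, hg⟩ := exists_copy_of_compatible hs hcover (fun n => (x n).1)
    fun m n h v => congrArg (fun f : α m => f.1 v) (hx h)
  exact ⟨g, (hg 0 ⟨p, hp 0⟩).trans (x 0).2⟩

end SimpleGraph

/-- If every connected finite pointed subgraph of a connected, locally finite pointed
graph `G` admits a pointed embedding into a locally finite pointed graph `F`, then so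
does `G`. -/
theorem stmt3 {V W : Type} (G : SimpleGraph V) (F : SimpleGraph W) (pG : V) (pF : W)
    (hlfG : ∀ v, (G.neighborSet v).Finite) (hlfF : ∀ w, (F.neighborSet w).Finite)
    (hconn : G.Connected)
    (h : ∀ S : G.Subgraph, S.verts.Finite → S.coe.Connected → ∀ hp : pG ∈ S.verts,
      ∃ f : S.coe →g F, Function.Injective f ∧ f ⟨pG, hp⟩ = pF) :
    ∃ f : G →g F, Function.Injective f ∧ f pG = pF := by
  obtain ⟨f, hf⟩ := exists_pointedCopy_of_forall_induce_ball hlfG hlfF hconn pG pF fun n => by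
    have hr : (0 : ℕ∞) < (n + 1 : ℕ) := Nat.cast_pos.mpr n.succ_pos
    obtain ⟨f, hf, hfp⟩ := h ((⊤ : G.Subgraph).induce (G.ball pG (n + 1 : ℕ)))
      (finite_ball hlfG pG _)
      (Subgraph.connected_iff'.mp (connected_induce_iff.mp (connected_induce_ball pG hr)))
      (mem_ball_self hr)
    exact ⟨⟨f.comp (Hom.ofLE (induce_eq_coe_induce_top _).le), hf⟩, hfp⟩
  exact ⟨f.toHom, f.injective, hf⟩
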